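/- arXiv:2503.08964 — 3 statements merged into one kernel-verified Lean document; each statement's English description precedes it below -/
import Mathlib

section
/- Let G be a connected graph that is not a tree, with shortest cycle length (girth) k ≥ 3, and let all edges be given the constant list {1, 2, …, e(G) − 1}. Then there is a colouring of the edges from these lists, assigning colour 1 to two edges at distance roughly k/2 apart on a shortest cycle and distinct colours to all other edges, which is strongly rainbow connected; in particular src^ℓ(G) ≤ e(G) − 1. -/
open SimpleGraph

/-- A colouring of (potential) edges makes `G` rainbow connected if every two vertices are
joined by a path whose edges receive pairwise distinct colours. -/
def IsRainbowConnected {V β : Type*} (G : SimpleGraph V) (c : Sym2 V → β) : Prop :=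
  ∀ u v : V, ∃ p : G.Walk u v, p.IsPath ∧ (p.edges.map c).Nodup

/-- Strongly rainbow connected: every two vertices are joined by a rainbow geodesic. -/
def IsStronglyRainbowConnected {V β : Type*} (G : SimpleGraph V) (c : Sym2 V → β) : Prop :=
  ∀ u v : V, ∃ p : G.Walk u v, p.IsPath ∧ p.length = G.dist u v ∧ (p.edges.map c).Nodup

/-- The rainbow connection number. -/
noncomputable def rc {V : Type*} (G : SimpleGraph V) : ℕ :=
  sInf {r : ℕ | ∃ c : Sym2 V → Fin r, IsRainbowConnected G c}

/-- The strong rainbow connection number. -/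
noncomputable def src {V : Type*} (G : SimpleGraph V) : ℕ :=
  sInf {r : ℕ | ∃ c : Sym2 V → Fin r, IsStronglyRainbowConnected G c}

/-- The list rainbow connection number. -/
noncomputable def rcl {V : Type*} (G : SimpleGraph V) : ℕ :=
  sInf {r : ℕ | ∀ L : Sym2 V → Finset ℕ, (∀ e ∈ G.edgeSet, r ≤ (L e).card) →
    ∃ c : Sym2 V → ℕ, (∀ e ∈ G.edgeSet, c e ∈ L e) ∧ IsRainbowConnected G c}

/-- The list strong rainbow connection number. -/
noncomputable def srcl {V : Type*} (G : SimpleGraph V) : ℕ :=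
  sInf {r : ℕ | ∀ L : Sym2 V → Finset ℕ, (∀ e ∈ G.edgeSet, r ≤ (L e).card) →
    ∃ c : Sym2 V → ℕ, (∀ e ∈ G.edgeSet, c e ∈ L e) ∧ IsStronglyRainbowConnected G c}

/-- The list chromatic number (choice number) of a graph. -/
noncomputable def listChromatic {V : Type*} (H : SimpleGraph V) : ℕ :=
  sInf {r : ℕ | ∀ L : V → Finset ℕ, (∀ v, r ≤ (L v).card) →
    ∃ c : V → ℕ, (∀ v, c v ∈ L v) ∧ ∀ u v, H.Adj u v → c u ≠ c v}

/-- The wheel `W n`: a cycle `C n` together with a universal hub vertex `none`. -/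
def wheel (n : ℕ) : SimpleGraph (Option (Fin n)) :=
  SimpleGraph.fromRel (fun x y =>
    (∃ a b, x = some a ∧ y = some b ∧ (cycleGraph n).Adj a b) ∨ (x = none ∧ y ≠ none))

/-- The Petersen graph as the Kneser graph `K(5,2)`. -/
def petersen : SimpleGraph {s : Finset (Fin 5) // s.card = 2} where
  Adj a b := Disjoint a.1 b.1
  symm := ⟨fun a b h => h.symm⟩
  loopless := ⟨fun a h => by
    have h0 : a.1 = ∅ := disjoint_self.mp h
    have := a.2
    rw [h0] at this
    simp at this⟩

/-- The square of the cycle `C n`: vertices at distance at most 2 are adjacent. -/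
def cycleSq (n : ℕ) : SimpleGraph (Fin n) where
  Adj a b := a ≠ b ∧ (cycleGraph n).dist a b ≤ 2
  symm := ⟨by
    intro a b h
    exact ⟨h.1.symm, by rw [SimpleGraph.dist_comm]; exact h.2⟩⟩
  loopless := ⟨fun a h => h.1 rfl⟩

section Helpers
variable {V : Type*} {G : SimpleGraph V}

lemma walk_support_eq_map {u w : V} (p : G.Walk u w) :
    p.support = (List.range (p.length + 1)).map p.getVert := by
  induction p with
  | nil => simp [Walk.getVert]
  | cons h q ih =>
    rw [Walk.support_cons, Walk.length_cons, ih]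
    conv_rhs => rw [List.range_succ_eq_map]
    simp [List.map_map, Function.comp_def, Walk.getVert_cons_succ]

lemma exists_subwalk {u w : V} (p : G.Walk u w) :
    ∀ i j, i ≤ j → j ≤ p.length →
    ∃ q : G.Walk (p.getVert i) (p.getVert j), q.length = j - i ∧
      q.support = (List.range (j - i + 1)).map (fun m => p.getVert (i + m)) := by
  induction p with
  | nil =>
    intro i j hij hj
    simp only [Walk.length_nil, Nat.le_zero] at hj
    subst hj
    simp only [Nat.le_zero] at hij
    subst hij
    exact ⟨Walk.nil, by simp, by simp [Walk.getVert]⟩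
  | @cons a b c h q ih =>
    intro i j hij hj
    match i, j with
    | 0, 0 =>
      refine ⟨Walk.nil.copy (Walk.getVert_zero _).symm (Walk.getVert_zero _).symm, by simp, ?_⟩
      simp [List.range_succ, Walk.getVert_zero]
    | 0, (j' + 1) =>
      obtain ⟨q0, hlen, hsup⟩ := ih 0 j' (Nat.zero_le _) (by simpa using hj)
      refine ⟨(Walk.cons h (q0.copy (Walk.getVert_zero q) (Walk.getVert_cons_succ q h).symm)).copy
        (Walk.getVert_zero _).symm rfl, by rw [Walk.length_copy, Walk.length_cons, Walk.length_copy, hlen]; omega, ?_⟩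
      rw [Walk.support_copy, Walk.support_cons, Walk.support_copy, hsup]
      simp only [Nat.sub_zero] at *
      conv_rhs => rw [List.range_succ_eq_map]
      simp [List.map_map, Function.comp_def, Walk.getVert_cons_succ]
    | (i' + 1), (j' + 1) =>
      obtain ⟨q0, hlen, hsup⟩ := ih i' j' (by omega) (by simpa using hj)
      refine ⟨q0.copy (Walk.getVert_cons_succ q h).symm (Walk.getVert_cons_succ q h).symm, by simpa using hlen, ?_⟩
      rw [Walk.support_copy, hsup]
      have : ∀ m : ℕ, q.getVert (i' + m) = (Walk.cons h q).getVert (i' + 1 + m) := by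
        intro m
        rw [show i' + 1 + m = (i' + m) + 1 by omega, Walk.getVert_cons_succ]
      simp only [this, Nat.succ_sub_succ]

lemma edge_index {u w : V} (p : G.Walk u w) {e : Sym2 V} (he : e ∈ p.edges) :
    ∃ i, i < p.length ∧ s(p.getVert i, p.getVert (i + 1)) = e := by
  induction p with
  | nil => simp at he
  | @cons a b c h q ih =>
    rw [Walk.edges_cons, List.mem_cons] at he
    rcases he with he | he
    · exact ⟨0, by simp, by
        rw [Walk.getVert_zero, Walk.getVert_cons_succ, Walk.getVert_zero]
        exact he.symm⟩
    · obtain ⟨i, hi, hei⟩ := ih he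
      exact ⟨i + 1, by simpa using hi, by rwa [Walk.getVert_cons_succ, Walk.getVert_cons_succ]⟩
variable {V : Type*} {G : SimpleGraph V}

lemma girth_le_cycle {a : V} (c : G.Walk a a) (hc : c.IsCycle) : G.girth ≤ c.length := by
  have h1 : G.egirth ≤ (c.length : ℕ∞) := by
    refine iInf_le_of_le a (iInf_le_of_le c (iInf_le_of_le hc le_rfl))
  calc G.girth = G.egirth.toNat := rfl
    _ ≤ (c.length : ℕ∞).toNat := ENat.toNat_le_toNat h1 (by simp)
    _ = c.length := by simp

lemma paths_eq_of_sum_lt_girth {u w : V} {P Q : G.Walk u w}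
    (hP : P.IsPath) (hQ : Q.IsPath) (hlt : P.length + Q.length < G.girth) : P = Q := by
  classical
  set s : Set (Sym2 V) := {e | e ∈ P.edges ∨ e ∈ Q.edges} with hs
  set H : SimpleGraph V := SimpleGraph.fromEdgeSet s with hH
  have hle : H ≤ G := by
    intro x y hxy
    rw [hH, fromEdgeSet_adj] at hxy
    rcases hxy.1 with h | h
    · exact (Walk.edges_subset_edgeSet P h)
    · exact (Walk.edges_subset_edgeSet Q h)
  have hmem : ∀ {e : Sym2 V}, e ∈ P.edges ∨ e ∈ Q.edges → e ∈ H.edgeSet := by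
    intro e he
    rw [hH, edgeSet_fromEdgeSet]
    refine ⟨he, ?_⟩
    have : e ∈ G.edgeSet := by
      rcases he with h | h
      · exact Walk.edges_subset_edgeSet P h
      · exact Walk.edges_subset_edgeSet Q h
    exact G.not_isDiag_of_mem_edgeSet this
  have hPe : ∀ e ∈ P.edges, e ∈ H.edgeSet := fun e he => hmem (Or.inl he)
  have hQe : ∀ e ∈ Q.edges, e ∈ H.edgeSet := fun e he => hmem (Or.inr he)
  by_cases hHa : H.IsAcyclic
  · have hpq : P.transfer H hPe = Q.transfer H hQe := by
      have := hHa.path_unique ⟨P.transfer H hPe, hP.transfer hPe⟩ ⟨Q.transfer H hQe, hQ.transfer hQe⟩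
      exact congrArg Subtype.val this
    have hback : ∀ (R : G.Walk u w) (hR : ∀ e ∈ R.edges, e ∈ H.edgeSet),
        (R.transfer H hR).map (SimpleGraph.Hom.ofLE hle) = R := by
      intro R hR
      rw [← Walk.transfer_eq_map_ofLE _ ?_ hle, Walk.transfer_transfer, Walk.transfer_self]
      rw [Walk.edges_transfer]
      exact R.edges_subset_edgeSet
    calc P = (P.transfer H hPe).map (SimpleGraph.Hom.ofLE hle) := (hback P hPe).symm
      _ = (Q.transfer H hQe).map (SimpleGraph.Hom.ofLE hle) := by rw [hpq]
      _ = Q := hback Q hQe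
  · exfalso
    simp only [SimpleGraph.IsAcyclic] at hHa
    push_neg at hHa
    obtain ⟨v, cw, hcw⟩ := hHa
    have hcyc : (cw.map (SimpleGraph.Hom.ofLE hle)).IsCycle := hcw.mapLe hle
    have hg : G.girth ≤ cw.length := by
      have := girth_le_cycle _ hcyc
      simpa using this
    have hsub : cw.edges ⊆ P.edges ++ Q.edges := by
      intro e he
      have : e ∈ H.edgeSet := Walk.edges_subset_edgeSet cw he
      rw [hH, edgeSet_fromEdgeSet] at this
      rcases this.1 with h | h
      · exact List.mem_append.mpr (Or.inl h)
      · exact List.mem_append.mpr (Or.inr h)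
    have hlen : cw.edges.length ≤ (P.edges ++ Q.edges).length :=
      (List.subperm_of_subset hcw.edges_nodup hsub).length_le
    rw [List.length_append, Walk.length_edges, Walk.length_edges, Walk.length_edges] at hlen
    omega
variable {V : Type*} {G : SimpleGraph V}

lemma dist_getVert (hG : G.Connected) {u w : V} {p : G.Walk u w} (hgeo : p.length = G.dist u w)
    {i j : ℕ} (hij : i ≤ j) (hj : j ≤ p.length) :
    G.dist (p.getVert i) (p.getVert j) = j - i := by
  obtain ⟨q1, hq1, -⟩ := exists_subwalk p 0 i (Nat.zero_le _) (le_trans hij hj)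
  obtain ⟨q2, hq2, -⟩ := exists_subwalk p i j hij hj
  obtain ⟨q3, hq3, -⟩ := exists_subwalk p j p.length hj le_rfl
  have h1 : G.dist u (p.getVert i) ≤ i := by
    have := hq1 ▸ dist_le q1
    rw [p.getVert_zero] at this
    omega
  have h2 : G.dist (p.getVert i) (p.getVert j) ≤ j - i := by simpa [hq2] using dist_le q2
  have h3 : G.dist (p.getVert j) w ≤ p.length - j := by
    have := hq3 ▸ dist_le q3
    rw [p.getVert_length] at this
    omega
  have t1 : G.dist u w ≤ G.dist u (p.getVert i) + G.dist (p.getVert i) w := hG.dist_triangle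
  have t2 : G.dist (p.getVert i) w ≤ G.dist (p.getVert i) (p.getVert j) + G.dist (p.getVert j) w :=
    hG.dist_triangle
  omega

lemma no_geo_aux (hG : G.Connected) {u w : V} {p : G.Walk u w} (hgeo : p.length = G.dist u w)
    {i j : ℕ} (hjlen : j < p.length) (hij : i < j) {a b c d : V}
    (hei : s(p.getVert i, p.getVert (i + 1)) = s(a, b))
    (hej : s(p.getVert j, p.getVert (j + 1)) = s(c, d))
    (h1 : G.dist a d ≠ G.dist b c + 2) (h2 : G.dist b c ≠ G.dist a d + 2)
    (h3 : G.dist a c ≠ G.dist b d + 2) (h4 : G.dist b d ≠ G.dist a c + 2) : False := by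
  have douter : G.dist (p.getVert i) (p.getVert (j + 1)) = j + 1 - i :=
    dist_getVert hG hgeo (by omega) (by omega)
  have dinner : G.dist (p.getVert (i + 1)) (p.getVert j) = j - (i + 1) :=
    dist_getVert hG hgeo (by omega) (by omega)
  rw [Sym2.eq_iff] at hei hej
  rcases hei with ⟨ha, hb⟩ | ⟨hb, ha⟩ <;> rcases hej with ⟨hc, hd⟩ | ⟨hd, hc⟩ <;>
    subst ha <;> subst hb <;> subst hc <;> subst hd <;> omega
lemma no_geodesic_both (hG : G.Connected) {a b c d : V}
    (hne : s(a, b) ≠ s(c, d))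
    (h1 : G.dist a d ≠ G.dist b c + 2) (h2 : G.dist b c ≠ G.dist a d + 2)
    (h3 : G.dist a c ≠ G.dist b d + 2) (h4 : G.dist b d ≠ G.dist a c + 2)
    {u w : V} (p : G.Walk u w) (hp : p.IsPath) (hgeo : p.length = G.dist u w)
    (hm1 : s(a, b) ∈ p.edges) (hm2 : s(c, d) ∈ p.edges) : False := by
  obtain ⟨i, hi, hei⟩ := edge_index p hm1
  obtain ⟨j, hj, hej⟩ := edge_index p hm2
  rcases lt_trichotomy i j with hij | hij | hij
  · exact no_geo_aux hG hgeo hj hij hei hej h1 h2 h3 h4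
  · subst hij
    rw [hei] at hej
    exact hne hej
  · refine no_geo_aux hG hgeo hi hij hej hei ?_ ?_ ?_ ?_
    all_goals
      have e1 : G.dist c b = G.dist b c := dist_comm
      have e2 : G.dist d a = G.dist a d := dist_comm
      have e3 : G.dist c a = G.dist a c := dist_comm
      have e4 : G.dist d b = G.dist b d := dist_comm
      omega

lemma key_lemma [Fintype V] (hG : G.Connected) (k : ℕ) (hk : 3 ≤ k)
    (hgirth : G.girth = k) :
    ∃ e₁ e₂ : Sym2 V, e₁ ∈ G.edgeSet ∧ e₂ ∈ G.edgeSet ∧ e₁ ≠ e₂ ∧ k ≤ G.edgeSet.ncard ∧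
      ∀ (u w : V) (p : G.Walk u w), p.IsPath → p.length = G.dist u w →
        ¬(e₁ ∈ p.edges ∧ e₂ ∈ p.edges) := by
  classical
  have hac : ¬ G.IsAcyclic := by
    intro h
    rw [← girth_eq_zero] at h
    omega
  obtain ⟨a, W, hW, hlenW⟩ := exists_girth_eq_length.mpr hac
  have hWk : W.length = k := by omega
  set v : ℕ → V := W.getVert with hv
  -- distinctness of cycle vertices
  have htail : W.support.tail = (List.range k).map (fun m => v (m + 1)) := by
    rw [walk_support_eq_map W, hWk, List.range_succ_eq_map]
    simp [List.map_map, Function.comp_def, hv]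
  have hinj : ∀ m1 ∈ List.range k, ∀ m2 ∈ List.range k, v (m1 + 1) = v (m2 + 1) → m1 = m2 := by
    have := hW.support_nodup
    rw [htail] at this
    exact List.inj_on_of_nodup_map this
  have hv0k : v 0 = v k := by
    rw [hv, W.getVert_zero, ← hWk, W.getVert_length]
  have hne : ∀ p q : ℕ, p < q → q ≤ k → ¬(p = 0 ∧ q = k) → v p ≠ v q := by
    intro p q hpq hqk hpq0 heq
    rcases Nat.eq_zero_or_pos p with hp0 | hp0
    · subst hp0
      have hqk' : q < k := by omega
      rw [hv0k] at heq
      have := hinj (q - 1) (by rw [List.mem_range]; omega) (k - 1) (by rw [List.mem_range]; omega)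
      rw [show q - 1 + 1 = q by omega, show k - 1 + 1 = k by omega] at this
      exact absurd (this heq.symm) (by omega)
    · have := hinj (p - 1) (by rw [List.mem_range]; omega) (q - 1) (by rw [List.mem_range]; omega)
      rw [show p - 1 + 1 = p by omega, show q - 1 + 1 = q by omega] at this
      exact absurd (this heq) (by omega)
  -- forward isometry
  have hdistF : ∀ p q : ℕ, p ≤ q → q ≤ k → 2 * (q - p) ≤ k → G.dist (v p) (v q) = q - p := by
    intro p q hpq hqk h2q
    obtain ⟨arc, harcl, harcs⟩ := exists_subwalk W p q hpq (by omega)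
    have harc_path : arc.IsPath := by
      rw [SimpleGraph.Walk.isPath_def, harcs]
      refine List.Nodup.map_on ?_ List.nodup_range
      intro m1 hm1 m2 hm2 hveq
      rw [List.mem_range] at hm1 hm2
      by_contra hne12
      rcases Nat.lt_or_ge m1 m2 with hlt | hge
      · exact hne (p + m1) (p + m2) (by omega) (by omega) (by omega) hveq
      · exact hne (p + m2) (p + m1) (by omega) (by omega) (by omega) hveq.symm
    have hle : G.dist (v p) (v q) ≤ q - p := by
      have hd : G.dist (v p) (v q) ≤ arc.length := dist_le arc
      omega
    rcases Nat.lt_or_ge (G.dist (v p) (v q)) (q - p) with hlt | hge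
    · exfalso
      obtain ⟨P, hPpath, hPlen⟩ := hG.exists_path_of_dist (v p) (v q)
      have := paths_eq_of_sum_lt_girth hPpath harc_path (by omega)
      rw [this] at hPlen
      omega
    · omega
  set t := k / 2 with ht
  have ht1 : 1 ≤ t := by omega
  have htk : t + 1 ≤ k - 1 := by omega
  refine ⟨s(v 0, v 1), s(v t, v (t + 1)), ?_, ?_, ?_, ?_, ?_⟩
  · exact W.adj_getVert_succ (by omega)
  · exact W.adj_getVert_succ (by omega)
  · intro heq
    rw [Sym2.eq_iff] at heq
    rcases heq with ⟨h01, -⟩ | ⟨h01, -⟩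
    · exact hne 0 t (by omega) (by omega) (by omega) h01
    · exact hne 0 (t + 1) (by omega) (by omega) (by omega) h01
  · -- k ≤ ncard
    have hnodup : W.edges.Nodup := hW.edges_nodup
    have hsub : (W.edges.toFinset : Set (Sym2 V)) ⊆ G.edgeSet := by
      intro e he
      simp only [List.coe_toFinset, Set.mem_setOf_eq] at he
      exact W.edges_subset_edgeSet he
    have := Set.ncard_le_ncard hsub (Set.toFinite _)
    rw [Set.ncard_coe_finset, List.toFinset_card_of_nodup hnodup, Walk.length_edges, hWk] at this
    exact this
  · intro u w p hp hgeo ⟨hm1, hm2⟩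
    have hA1 : G.dist (v 0) (v (t + 1)) ≤ k - t - 1 := by
      obtain ⟨q3, hq3l, -⟩ := exists_subwalk W (t + 1) k (by omega) (by omega)
      have hd : G.dist (v (t + 1)) (v k) ≤ q3.length := dist_le q3
      rw [← hv0k] at hd
      rw [SimpleGraph.dist_comm] at hd
      omega
    have hB : G.dist (v 1) (v t) = t - 1 := hdistF 1 t (by omega) (by omega) (by omega)
    have hC : G.dist (v 0) (v t) = t := by
      have := hdistF 0 t (by omega) (by omega) (by omega)
      omega
    have hD : G.dist (v 1) (v (t + 1)) = t := by
      have := hdistF 1 (t + 1) (by omega) (by omega) (by omega)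
      omega
    have hA2 : t - 1 ≤ G.dist (v 0) (v (t + 1)) := by
      have htri : G.dist (v 0) (v t) ≤ G.dist (v 0) (v (t + 1)) + G.dist (v (t + 1)) (v t) :=
        hG.dist_triangle
      have hadj : G.Adj (v t) (v (t + 1)) := W.adj_getVert_succ (by omega)
      have hd1 : G.dist (v (t + 1)) (v t) ≤ 1 := by
        simpa using dist_le hadj.symm.toWalk
      omega
    refine no_geodesic_both hG ?_ ?_ ?_ ?_ ?_ p hp hgeo hm1 hm2
    · intro heq
      rw [Sym2.eq_iff] at heq
      rcases heq with ⟨h01, -⟩ | ⟨h01, -⟩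
      · exact hne 0 t (by omega) (by omega) (by omega) h01
      · exact hne 0 (t + 1) (by omega) (by omega) (by omega) h01
    · omega
    · omega
    · omega
    · omega

end Helpers

/-- Theorem: if `G` is connected, not a tree, with girth `k ≥ 3`, then for the constant
lists `{1, …, e(G) - 1}` there is a strongly rainbow connected colouring from the lists
giving colour `1` to exactly two edges and distinct colours to all other edges;
in particular `src^ℓ(G) ≤ e(G) - 1`. -/

theorem stmt6 {V : Type*} [Fintype V] (G : SimpleGraph V) (hG : G.Connected)
    (k : ℕ) (hk : 3 ≤ k) (hgirth : G.girth = (k : ℕ∞)) :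
    (∃ c : Sym2 V → ℕ,
      (∀ e ∈ G.edgeSet, c e ∈ Finset.Icc 1 (G.edgeSet.ncard - 1)) ∧
      (∃ e₁ ∈ G.edgeSet, ∃ e₂ ∈ G.edgeSet, e₁ ≠ e₂ ∧ c e₁ = 1 ∧ c e₂ = 1 ∧
        Set.InjOn c (G.edgeSet \ {e₁, e₂})) ∧
      IsStronglyRainbowConnected G c) ∧
    srcl G ≤ G.edgeSet.ncard - 1 := by
  classical
  have hgk : G.girth = k := by exact_mod_cast hgirth
  obtain ⟨e₁, e₂, he₁, he₂, hne, hkn, hkey⟩ := key_lemma hG k hk hgk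
  set n := G.edgeSet.ncard with hn
  have hn3 : 3 ≤ n := le_trans hk hkn
  have hEfin : G.edgeSet.Finite := Set.toFinite _
  have hEFcard : hEfin.toFinset.card = n := (Set.ncard_eq_toFinset_card _ hEfin).symm
  constructor
  · -- explicit colouring
    have hsub : ({e₁, e₂} : Set (Sym2 V)) ⊆ G.edgeSet := by
      intro x hx
      rcases hx with rfl | hx
      · exact he₁
      · rw [Set.mem_singleton_iff] at hx; subst hx; exact he₂
    have hSfin : (G.edgeSet \ {e₁, e₂}).Finite := hEfin.diff
    have hScard : hSfin.toFinset.card = n - 2 := by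
      rw [← Set.ncard_eq_toFinset_card _ hSfin, Set.ncard_diff hsub (Set.toFinite _),
        Set.ncard_pair hne]
    have hcard : hSfin.toFinset.card = (Finset.Icc 2 (n - 1)).card := by
      rw [hScard, Nat.card_Icc]; omega
    obtain e := Finset.equivOfCardEq hcard
    refine ⟨fun x => if h : x ∈ hSfin.toFinset then (e ⟨x, h⟩ : ℕ) else 1, ?_, ?_, ?_⟩
    · intro x hx
      by_cases h : x ∈ hSfin.toFinset
      · simp only [h, dif_pos]
        have := (e ⟨x, h⟩).2
        rw [Finset.mem_Icc] at this ⊢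
        omega
      · simp only [h, dif_neg, not_false_iff]
        rw [Finset.mem_Icc]
        omega
    · refine ⟨e₁, he₁, e₂, he₂, hne, ?_, ?_, ?_⟩
      · have h1 : e₁ ∉ hSfin.toFinset := by
          rw [hSfin.mem_toFinset]
          intro hmem
          exact hmem.2 (by simp)
        exact dif_neg h1
      · have h1 : e₂ ∉ hSfin.toFinset := by
          rw [hSfin.mem_toFinset]
          intro hmem
          exact hmem.2 (by simp)
        exact dif_neg h1
      · intro x hx y hy hxy
        have hx' : x ∈ hSfin.toFinset := hSfin.mem_toFinset.mpr hx
        have hy' : y ∈ hSfin.toFinset := hSfin.mem_toFinset.mpr hy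
        simp only [hx', hy', dif_pos] at hxy
        have : e ⟨x, hx'⟩ = e ⟨y, hy'⟩ := Subtype.ext hxy
        have := e.injective this
        exact congrArg Subtype.val this
    · intro u' w'
      obtain ⟨p, hp, hlen⟩ := hG.exists_path_of_dist u' w'
      refine ⟨p, hp, hlen, ?_⟩
      refine List.Nodup.map_on ?_ hp.edges_nodup
      intro x hx y hy hcxy
      have hxE := p.edges_subset_edgeSet hx
      have hyE := p.edges_subset_edgeSet hy
      have hmem12 : ∀ z, z ∈ G.edgeSet → z ∉ hSfin.toFinset → z = e₁ ∨ z = e₂ := by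
        intro z hz hz'
        rw [hSfin.mem_toFinset] at hz'
        simp only [Set.mem_diff, Set.mem_insert_iff, Set.mem_singleton_iff] at hz'
        tauto
      by_cases hxS : x ∈ hSfin.toFinset <;> by_cases hyS : y ∈ hSfin.toFinset
      · simp only [hxS, hyS, dif_pos] at hcxy
        exact congrArg Subtype.val (e.injective (Subtype.ext hcxy))
      · exfalso
        simp only [hxS, hyS, dif_pos, dif_neg, not_false_iff] at hcxy
        have := (e ⟨x, hxS⟩).2
        rw [Finset.mem_Icc] at this
        omega
      · exfalso
        simp only [hxS, hyS, dif_pos, dif_neg, not_false_iff] at hcxy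
        have := (e ⟨y, hyS⟩).2
        rw [Finset.mem_Icc] at this
        omega
      · rcases hmem12 x hxE hxS with rfl | rfl <;> rcases hmem12 y hyE hyS with rfl | rfl
        · rfl
        · exact absurd ⟨hx, hy⟩ (hkey u' w' p hp hlen)
        · exact absurd ⟨hy, hx⟩ (hkey u' w' p hp hlen)
        · rfl
  · -- srcl bound
    apply Nat.sInf_le
    simp only [Set.mem_setOf_eq]
    intro L hL
    by_cases hcap : (L e₁ ∩ L e₂).Nonempty
    · set τ : Finset (Sym2 V) := hEfin.toFinset.erase e₂ with hτ
      have he₁τ : e₁ ∈ τ := Finset.mem_erase.mpr ⟨hne, hEfin.mem_toFinset.mpr he₁⟩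
      have hτcard : τ.card = n - 1 := by
        rw [hτ, Finset.card_erase_of_mem (hEfin.mem_toFinset.mpr he₂), hEFcard]
      set T : ↥τ → Finset ℕ := fun x => if (x : Sym2 V) = e₁ then L e₁ ∩ L e₂ else L x with hT
      have hHall : ∀ s : Finset ↥τ, s.card ≤ (s.biUnion T).card := by
        intro s
        rcases s.eq_empty_or_nonempty with rfl | hs
        · simp
        by_cases hex : ∃ x ∈ s, (x : Sym2 V) ≠ e₁
        · obtain ⟨x, hxs, hxne⟩ := hex
          have hTx : T x = L x := by rw [hT]; simp [hxne]
          have hxE : (x : Sym2 V) ∈ G.edgeSet :=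
            hEfin.mem_toFinset.mp (Finset.mem_of_mem_erase x.2)
          have h1 : n - 1 ≤ (T x).card := by rw [hTx]; exact hL _ hxE
          have h2 : (T x).card ≤ (s.biUnion T).card :=
            Finset.card_le_card (Finset.subset_biUnion_of_mem T hxs)
          have h3 : s.card ≤ n - 1 := by
            have := Finset.card_le_univ s
            rwa [Fintype.card_coe, hτcard] at this
          omega
        · push_neg at hex
          have hcard1 : s.card ≤ 1 := Finset.card_le_one.mpr
            (fun a ha b hb => Subtype.ext ((hex a ha).trans (hex b hb).symm))
          obtain ⟨x, hxs⟩ := hs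
          have hTx : T x = L e₁ ∩ L e₂ := by rw [hT]; simp [hex x hxs]
          have h1 : 1 ≤ (T x).card := by rw [hTx]; exact Finset.card_pos.mpr hcap
          have h2 := Finset.card_le_card (Finset.subset_biUnion_of_mem T hxs)
          omega
      obtain ⟨f, hfinj, hf⟩ := (Finset.all_card_le_biUnion_card_iff_existsInjective' T).mp hHall
      have hfe₁ : f ⟨e₁, he₁τ⟩ ∈ L e₁ ∩ L e₂ := by
        have h0 := hf ⟨e₁, he₁τ⟩
        simp only [hT] at h0
        split_ifs at h0 with hcond
        · exact h0
        · exact (hcond trivial).elim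
      have hnotτ : ∀ z, z ∈ G.edgeSet → z ∉ τ → z = e₂ := by
        intro z hz hz'
        by_contra hzz
        exact hz' (Finset.mem_erase.mpr ⟨hzz, hEfin.mem_toFinset.mpr hz⟩)
      refine ⟨fun x => if h : x ∈ τ then f ⟨x, h⟩ else f ⟨e₁, he₁τ⟩, ?_, ?_⟩
      · intro e' he'
        by_cases hmem : e' ∈ τ
        · simp only [hmem, dif_pos]
          have h0 := hf ⟨e', hmem⟩
          simp only [hT] at h0
          split_ifs at h0 with hcond
          · have he1 : L e' = L e₁ := by rw [show e' = e₁ from hcond]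
            rw [he1]
            exact (Finset.mem_inter.mp h0).1
          · exact h0
        · have he2 := hnotτ e' he' hmem
          subst he2
          simp only [hmem, dif_neg, not_false_iff]
          exact (Finset.mem_inter.mp hfe₁).2
      · intro u' w'
        obtain ⟨p, hp, hlen⟩ := hG.exists_path_of_dist u' w'
        refine ⟨p, hp, hlen, ?_⟩
        refine List.Nodup.map_on ?_ hp.edges_nodup
        intro x hx y hy hcxy
        have hxE := p.edges_subset_edgeSet hx
        have hyE := p.edges_subset_edgeSet hy
        by_cases hxS : x ∈ τ <;> by_cases hyS : y ∈ τ
        · simp only [hxS, hyS, dif_pos] at hcxy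
          exact congrArg Subtype.val (hfinj hcxy)
        · exfalso
          have hy2 := hnotτ y hyE hyS
          simp only [hxS, hyS, dif_pos, dif_neg, not_false_iff] at hcxy
          have : (⟨x, hxS⟩ : ↥τ) = ⟨e₁, he₁τ⟩ := hfinj hcxy
          have hx1 : x = e₁ := congrArg Subtype.val this
          subst hx1; subst hy2
          exact (hkey u' w' p hp hlen) ⟨hx, hy⟩
        · exfalso
          have hx2 := hnotτ x hxE hxS
          simp only [hxS, hyS, dif_pos, dif_neg, not_false_iff] at hcxy
          have : (⟨e₁, he₁τ⟩ : ↥τ) = ⟨y, hyS⟩ := hfinj hcxy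
          have hy1 : y = e₁ := (congrArg Subtype.val this).symm
          subst hy1; subst hx2
          exact (hkey u' w' p hp hlen) ⟨hy, hx⟩
        · rw [hnotτ x hxE hxS, hnotτ y hyE hyS]
    · -- disjoint lists: colour everything distinctly
      have hdisj : Disjoint (L e₁) (L e₂) := by
        rw [Finset.disjoint_iff_inter_eq_empty]
        exact Finset.not_nonempty_iff_eq_empty.mp hcap
      set T : ↥hEfin.toFinset → Finset ℕ := fun x => L x with hT
      have hHall : ∀ s : Finset ↥hEfin.toFinset, s.card ≤ (s.biUnion T).card := by
        intro s
        rcases s.eq_empty_or_nonempty with rfl | ⟨x, hxs⟩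
        · simp
        have hsn : s.card ≤ n := by
          have := Finset.card_le_univ s
          rwa [Fintype.card_coe, hEFcard] at this
        by_cases hle : s.card ≤ n - 1
        · have hxE : (x : Sym2 V) ∈ G.edgeSet := hEfin.mem_toFinset.mp x.2
          have h1 : n - 1 ≤ (T x).card := hL _ hxE
          have h2 : (T x).card ≤ (s.biUnion T).card :=
            Finset.card_le_card (Finset.subset_biUnion_of_mem T hxs)
          omega
        · have hsu : s = Finset.univ := Finset.eq_univ_of_card s (by
            rw [Fintype.card_coe, hEFcard]; omega)
          have hm1 : (⟨e₁, hEfin.mem_toFinset.mpr he₁⟩ : ↥hEfin.toFinset) ∈ s := by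
            rw [hsu]; exact Finset.mem_univ _
          have hm2 : (⟨e₂, hEfin.mem_toFinset.mpr he₂⟩ : ↥hEfin.toFinset) ∈ s := by
            rw [hsu]; exact Finset.mem_univ _
          have hsubu : L e₁ ∪ L e₂ ⊆ s.biUnion T :=
            Finset.union_subset (Finset.subset_biUnion_of_mem T hm1)
              (Finset.subset_biUnion_of_mem T hm2)
          have hcu : (L e₁ ∪ L e₂).card = (L e₁).card + (L e₂).card :=
            Finset.card_union_of_disjoint hdisj
          have h1 := hL e₁ he₁
          have h2 := hL e₂ he₂
          have h3 := Finset.card_le_card hsubu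
          omega
      obtain ⟨f, hfinj, hf⟩ := (Finset.all_card_le_biUnion_card_iff_existsInjective' T).mp hHall
      refine ⟨fun x => if h : x ∈ hEfin.toFinset then f ⟨x, h⟩ else 0, ?_, ?_⟩
      · intro e' he'
        have hmem : e' ∈ hEfin.toFinset := hEfin.mem_toFinset.mpr he'
        simp only [hmem, dif_pos]
        exact hf ⟨e', hmem⟩
      · intro u' w'
        obtain ⟨p, hp, hlen⟩ := hG.exists_path_of_dist u' w'
        refine ⟨p, hp, hlen, ?_⟩
        refine List.Nodup.map_on ?_ hp.edges_nodup
        intro x hx y hy hcxy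
        have hxS : x ∈ hEfin.toFinset := hEfin.mem_toFinset.mpr (p.edges_subset_edgeSet hx)
        have hyS : y ∈ hEfin.toFinset := hEfin.mem_toFinset.mpr (p.edges_subset_edgeSet hy)
        simp only [hxS, hyS, dif_pos] at hcxy
        exact congrArg Subtype.val (hfinj hcxy)
end

section
/- Let b ≥ 2 and let G be the graph on b + (b−1)^{b−1} vertices formed by taking a graph H on b−1 vertices, a clique K on (b−1)^{b−1} vertices disjoint from H, and a new vertex v joined to all vertices of H and K. Then src^ℓ(G) = b. -/
open SimpleGraph

lemma walk_len_two {V : Type*} {G : SimpleGraph V} {u w : V} (p : G.Walk u w) (h : p.length = 2) :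
    ∃ (x : V) (h1 : G.Adj u x) (h2 : G.Adj x w),
      p = Walk.cons h1 (Walk.cons h2 Walk.nil) := by
  match p with
  | .nil => simp at h
  | .cons h1 q =>
    match q with
    | .nil => simp at h
    | .cons h2 r =>
      match r with
      | .nil => exact ⟨_, h1, h2, rfl⟩
      | .cons _ _ => simp [Walk.length_cons] at h

lemma dist_eq_two' {V : Type*} {G : SimpleGraph V} {u w x : V} (hne : u ≠ w)
    (hna : ¬ G.Adj u w) (h1 : G.Adj u x) (h2 : G.Adj x w) : G.dist u w = 2 := by
  have hle : G.dist u w ≤ 2 := by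
    have h := SimpleGraph.dist_le (Walk.cons h1 (Walk.cons h2 (Walk.nil : G.Walk w w)))
    simpa using h
  have h0 : G.dist u w ≠ 0 := by
    rw [ne_eq, SimpleGraph.dist_eq_zero_iff_eq_or_not_reachable]
    push_neg
    exact ⟨hne, ⟨Walk.cons h1 (Walk.cons h2 Walk.nil)⟩⟩
  have h1' : G.dist u w ≠ 1 := fun h => hna (SimpleGraph.dist_eq_one_iff_adj.mp h)
  omega

lemma exists_injOn_pick {V : Type*} [DecidableEq V] (L : V → Finset ℕ) :
    ∀ (A : Finset V), (∀ s ∈ A, A.card ≤ (L s).card) →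
    ∃ f : V → ℕ, (∀ s ∈ A, f s ∈ L s) ∧ Set.InjOn f A := by
  intro A
  induction A using Finset.induction_on with
  | empty => exact fun _ => ⟨fun _ => 0, by simp, by simp⟩
  | @insert a A' ha ih =>
    intro hcard
    obtain ⟨f, hf1, hf2⟩ := ih (fun s hs => le_trans (by simp [Finset.card_insert_of_notMem ha])
      (hcard s (Finset.mem_insert_of_mem hs)))
    have hx : (L a \ A'.image f).Nonempty := by
      apply Finset.card_pos.mp
      have h1 : (A'.image f).card ≤ A'.card := Finset.card_image_le
      have h2 : A'.card + 1 ≤ (L a).card := by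
        have := hcard a (Finset.mem_insert_self a A')
        rwa [Finset.card_insert_of_notMem ha] at this
      have := Finset.le_card_sdiff (A'.image f) (L a)
      omega
    obtain ⟨x, hx⟩ := hx
    rw [Finset.mem_sdiff] at hx
    refine ⟨Function.update f a x, ?_, ?_⟩
    · intro s hs
      rcases Finset.mem_insert.mp hs with rfl | hs'
      · simp [hx.1]
      · rw [Function.update_of_ne (by rintro rfl; exact ha hs')]
        exact hf1 s hs'
    · intro s hs t ht hst
      simp only [Finset.coe_insert, Set.mem_insert_iff, Finset.mem_coe] at hs ht
      rcases hs with rfl | hs2 <;> rcases ht with rfl | ht2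
      · rfl
      · exfalso; rw [Function.update_self, Function.update_of_ne (by rintro rfl; exact ha ht2)] at hst
        exact hx.2 (Finset.mem_image.mpr ⟨t, ht2, hst.symm⟩)
      · exfalso; rw [Function.update_self, Function.update_of_ne (by rintro rfl; exact ha hs2)] at hst
        exact hx.2 (Finset.mem_image.mpr ⟨s, hs2, hst⟩)
      · rw [Function.update_of_ne (by rintro rfl; exact ha hs2),
            Function.update_of_ne (by rintro rfl; exact ha ht2)] at hst
        exact hf2 hs2 ht2 hst




/-- Theorem: for `b ≥ 2`, the graph obtained from a graph on `b - 1` vertices, a disjoint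
clique on `(b-1)^(b-1)` vertices, and a new universal vertex `v` joined to everything,
with no edges between the two parts, satisfies `src^ℓ(G) = b`. -/
theorem stmt17 {V : Type*} [Fintype V] (G : SimpleGraph V) (b : ℕ) (hb : 2 ≤ b)
    (v : V) (S T : Finset V)
    (hvS : v ∉ S) (hvT : v ∉ T) (hST : Disjoint S T)
    (hpart : ∀ u : V, u = v ∨ u ∈ S ∨ u ∈ T)
    (hScard : S.card = b - 1) (hTcard : T.card = (b - 1) ^ (b - 1))
    (huniv : ∀ u : V, u ≠ v → G.Adj v u)
    (hclique : ∀ x ∈ T, ∀ y ∈ T, x ≠ y → G.Adj x y)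
    (hsep : ∀ x ∈ S, ∀ y ∈ T, ¬ G.Adj x y) :
    srcl G = b := by
  classical
  have hSne : ∀ s ∈ S, s ≠ v := fun s hs h => hvS (h ▸ hs)
  have hTne : ∀ t ∈ T, t ≠ v := fun t ht h => hvT (h ▸ ht)
  -- ===== Upper bound : b works =====
  have hmem : ∀ L : Sym2 V → Finset ℕ, (∀ e ∈ G.edgeSet, b ≤ (L e).card) →
      ∃ c : Sym2 V → ℕ, (∀ e ∈ G.edgeSet, c e ∈ L e) ∧ IsStronglyRainbowConnected G c := by
    intro L hL
    have hedge_vu : ∀ u : V, u ≠ v → s(v, u) ∈ G.edgeSet := fun u hu => huniv u hu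
    obtain ⟨f, hf1, hf2⟩ := exists_injOn_pick (fun s => L s(v, s)) S (by
      intro s hs
      have h1 := hL _ (hedge_vu s (hSne s hs))
      show S.card ≤ (L s(v, s)).card
      rw [hScard]
      omega)
    have hgex : ∀ t ∈ T, ∃ x, x ∈ L s(v, t) ∧ x ∉ S.image f := by
      intro t ht
      have h1 := hL _ (hedge_vu t (hTne t ht))
      have h2 : (S.image f).card ≤ b - 1 := hScard ▸ Finset.card_image_le
      have h3 := Finset.le_card_sdiff (S.image f) (L s(v, t))
      have hne : (L s(v, t) \ S.image f).Nonempty := Finset.card_pos.mp (by omega)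
      obtain ⟨x, hx⟩ := hne
      rw [Finset.mem_sdiff] at hx
      exact ⟨x, hx.1, hx.2⟩
    choose g hg1 hg2 using hgex
    set g' : V → ℕ := fun u => if h : u ∈ T then g u h else 0 with hg'_def
    set spoke : V → ℕ := fun u => if u ∈ S then f u else g' u with hspoke_def
    set c : Sym2 V → ℕ := Sym2.lift ⟨fun x y =>
      if x = v then spoke y else if y = v then spoke x
      else (if h : (L s(x, y)).Nonempty then (L s(x, y)).min' h else 0), by
        intro x y
        by_cases hx : x = v <;> by_cases hy : y = v <;> simp [hx, hy]
        rw [show s(y, x) = s(x, y) from Sym2.eq_swap]⟩ with hc_def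
    have hcv : ∀ u : V, c s(v, u) = spoke u := by
      intro u
      rw [hc_def, Sym2.lift_mk]
      simp
    have hcv' : ∀ u : V, c s(u, v) = spoke u := by
      intro u
      rw [Sym2.eq_swap]
      exact hcv u
    have hspokeS : ∀ s ∈ S, spoke s = f s := by
      intro s hs; simp [hspoke_def, hs]
    have hspokeT : ∀ t (ht : t ∈ T), spoke t = g t ht := by
      intro t ht
      have hnS : t ∉ S := Finset.disjoint_right.mp hST ht
      simp [hspoke_def, hnS, hg'_def, ht]
    refine ⟨c, ?_, ?_⟩
    · -- membership
      intro e he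
      induction e using Sym2.ind with
      | _ x y =>
        rw [SimpleGraph.mem_edgeSet] at he
        have hspokeL : ∀ u : V, u ≠ v → spoke u ∈ L s(v, u) := by
          intro u hu
          rcases hpart u with rfl | hS | hT
          · exact absurd rfl hu
          · rw [hspokeS u hS]; exact hf1 u hS
          · rw [hspokeT u hT]; exact hg1 u hT
        by_cases hx : x = v
        · rw [hx, hcv]
          refine hspokeL y (fun h => G.loopless.irrefl v ?_)
          rw [hx, h] at he
          exact he
        · by_cases hy : y = v
          · rw [hy, hcv' x, show s(x, v) = s(v, x) from Sym2.eq_swap]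
            exact hspokeL x hx
          · have hmin : (L s(x, y)).Nonempty := by
              have := hL _ (G.mem_edgeSet.mpr he)
              exact Finset.card_pos.mp (by omega)
            have hcval : c s(x, y) = (L s(x, y)).min' hmin := by
              rw [hc_def, Sym2.lift_mk]
              simp [hx, hy, hmin]
            rw [hcval]
            exact Finset.min'_mem _ _
    · -- strongly rainbow connected
      intro u w
      by_cases huw : u = w
      · subst huw
        exact ⟨Walk.nil, Walk.IsPath.nil, by simp [SimpleGraph.dist_self], by simp⟩
      by_cases hadj : G.Adj u w
      · refine ⟨Walk.cons hadj Walk.nil, ?_, ?_, ?_⟩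
        · simp [Walk.isPath_def, huw]
        · simp [SimpleGraph.dist_eq_one_iff_adj.mpr hadj]
        · simp
      · have hu : u ≠ v := by rintro rfl; exact hadj (huniv w (fun h => huw h.symm))
        have hw : w ≠ v := by rintro rfl; exact hadj (huniv u (fun h => huw h)).symm
        have h1 : G.Adj u v := (huniv u hu).symm
        have h2 : G.Adj v w := huniv w hw
        have hkey : spoke u ≠ spoke w := by
          rcases hpart u with rfl | hS | hT
          · exact absurd rfl hu
          · rcases hpart w with rfl | hS' | hT'
            · exact absurd rfl hw
            · rw [hspokeS u hS, hspokeS w hS']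
              exact fun h => huw (hf2 hS hS' h)
            · rw [hspokeS u hS, hspokeT w hT']
              intro h
              exact hg2 w hT' (Finset.mem_image.mpr ⟨u, hS, h⟩)
          · rcases hpart w with rfl | hS' | hT'
            · exact absurd rfl hw
            · rw [hspokeT u hT, hspokeS w hS']
              intro h
              exact hg2 u hT (Finset.mem_image.mpr ⟨w, hS', h.symm⟩)
            · exact absurd (hclique u hT w hT' huw) hadj
        refine ⟨Walk.cons h1 (Walk.cons h2 Walk.nil), ?_, ?_, ?_⟩
        · simp [Walk.isPath_def, hu, huw, Ne.symm hw]
        · have := dist_eq_two' huw hadj h1 h2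
          simp [this]
        · have hedges : (Walk.cons h1 (Walk.cons h2 Walk.nil)).edges = [s(u, v), s(v, w)] := rfl
          rw [hedges]
          simp only [List.map_cons, List.map_nil, hcv' u, hcv w]
          simp [List.nodup_cons, hkey]
  -- ===== Lower bound =====
  have hlow : ∀ m : ℕ, (∀ L : Sym2 V → Finset ℕ, (∀ e ∈ G.edgeSet, m ≤ (L e).card) →
      ∃ c : Sym2 V → ℕ, (∀ e ∈ G.edgeSet, c e ∈ L e) ∧ IsStronglyRainbowConnected G c) →
      b ≤ m := by
    intro m hm
    by_contra hlt
    push_neg at hlt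
    have hcS : Fintype.card {x // x ∈ S} = b - 1 := by rw [Fintype.card_coe, hScard]
    have hcT : Fintype.card {x // x ∈ T} = Fintype.card (Fin (b - 1) → Fin (b - 1)) := by
      rw [Fintype.card_coe, hTcard, Fintype.card_fun, Fintype.card_fin]
    set eS : {x // x ∈ S} ≃ Fin (b - 1) := Fintype.equivFinOfCardEq hcS with heS
    set eT : {x // x ∈ T} ≃ (Fin (b - 1) → Fin (b - 1)) := Fintype.equivOfCardEq hcT with heT
    set i0 : Fin (b - 1) := ⟨0, by omega⟩ with hi0
    set idx : V → Fin (b - 1) := fun u => if h : u ∈ S then eS ⟨u, h⟩ else i0 with hidx_def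
    set φof : V → (Fin (b - 1) → Fin (b - 1)) :=
      fun u => if h : u ∈ T then eT ⟨u, h⟩ else fun _ => i0 with hφ_def
    set mL : V → Finset ℕ := fun u =>
      if u ∈ S then Finset.univ.image (fun j : Fin (b - 1) => Nat.pair (idx u) j)
      else Finset.univ.image (fun i : Fin (b - 1) => Nat.pair i (φof u i)) with hmL_def
    have hmLcard : ∀ u : V, (mL u).card = b - 1 := by
      intro u
      by_cases hS : u ∈ S
      · rw [hmL_def]
        simp only [if_pos hS]
        rw [Finset.card_image_of_injective _
          (fun a b h => Fin.val_injective (Nat.pair_eq_pair.mp h).2)]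
        simp
      · rw [hmL_def]
        simp only [if_neg hS]
        rw [Finset.card_image_of_injective _
          (fun a b h => Fin.val_injective (Nat.pair_eq_pair.mp h).1)]
        simp
    set L : Sym2 V → Finset ℕ := Sym2.lift ⟨fun x y =>
      if x = v then mL y else if y = v then mL x else Finset.range (b - 1), by
        intro x y
        by_cases hx : x = v <;> by_cases hy : y = v <;> simp [hx, hy]⟩ with hL_def
    have hLv : ∀ u : V, L s(v, u) = mL u := by
      intro u
      rw [hL_def, Sym2.lift_mk]
      simp
    have hLcard : ∀ x y : V, (L s(x, y)).card = b - 1 := by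
      intro x y
      rw [hL_def, Sym2.lift_mk]
      by_cases hx : x = v <;> by_cases hy : y = v <;> simp [hx, hy, hmLcard]
    obtain ⟨c, hcmem, hsrc⟩ := hm L (by
      intro e _
      induction e using Sym2.ind with
      | _ x y =>
        rw [hLcard x y]
        omega)
    -- define ψ
    have hψex : ∀ i : Fin (b - 1), ∃ j : Fin (b - 1),
        c s(v, (eS.symm i : V)) = Nat.pair i j := by
      intro i
      have hsS : ((eS.symm i : V)) ∈ S := (eS.symm i).2
      have hedge : s(v, (eS.symm i : V)) ∈ G.edgeSet := huniv _ (hSne _ hsS)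
      have hc := hcmem _ hedge
      rw [hLv] at hc
      rw [hmL_def] at hc
      simp only [if_pos hsS, Finset.mem_image] at hc
      obtain ⟨j, _, hj⟩ := hc
      refine ⟨j, ?_⟩
      rw [← hj]
      have hidx : idx (eS.symm i : V) = i := by
        rw [hidx_def]
        simp only [dif_pos hsS]
        rw [show (⟨(eS.symm i : V), hsS⟩ : {x // x ∈ S}) = eS.symm i from Subtype.ext rfl,
          Equiv.apply_symm_apply]
      rw [hidx]
    choose ψ hψ using hψex
    have htT : ((eT.symm ψ : V)) ∈ T := (eT.symm ψ).2
    have hφt : φof (eT.symm ψ : V) = ψ := by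
      rw [hφ_def]
      simp only [dif_pos htT]
      rw [show (⟨(eT.symm ψ : V), htT⟩ : {x // x ∈ T}) = eT.symm ψ from Subtype.ext rfl,
        Equiv.apply_symm_apply]
    have htnS : ((eT.symm ψ : V)) ∉ S := Finset.disjoint_right.mp hST htT
    have hct := hcmem s(v, (eT.symm ψ : V)) (huniv _ (hTne _ htT))
    rw [hLv, hmL_def] at hct
    simp only [if_neg htnS, hφt, Finset.mem_image] at hct
    obtain ⟨i, _, hi⟩ := hct
    have hceq : c s(v, (eS.symm i : V)) = c s(v, (eT.symm ψ : V)) := by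
      rw [hψ i, ← hi]
    -- contradiction through the unique geodesic
    have hsS : ((eS.symm i : V)) ∈ S := (eS.symm i).2
    have hst : (eS.symm i : V) ≠ (eT.symm ψ : V) := fun h => htnS (h ▸ hsS)
    have hnadj : ¬ G.Adj (eS.symm i : V) (eT.symm ψ : V) := hsep _ hsS _ htT
    obtain ⟨p, hpath, hlen, hnd⟩ := hsrc (eS.symm i : V) (eT.symm ψ : V)
    have hd2 : G.dist (eS.symm i : V) (eT.symm ψ : V) = 2 :=
      dist_eq_two' hst hnadj (huniv _ (hSne _ hsS)).symm (huniv _ (hTne _ htT))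
    rw [hd2] at hlen
    obtain ⟨x, ha1, ha2, rfl⟩ := walk_len_two p hlen
    have hxv : x = v := by
      rcases hpart x with h | hxS | hxT
      · exact h
      · exact absurd ha2 (hsep x hxS _ htT)
      · exact absurd ha1 (hsep _ hsS x hxT)
    have hedges : (Walk.cons ha1 (Walk.cons ha2 Walk.nil)).edges =
        [s((eS.symm i : V), x), s(x, (eT.symm ψ : V))] := rfl
    rw [hedges, hxv] at hnd
    simp only [List.map_cons, List.map_nil, List.nodup_cons, List.mem_singleton,
      List.not_mem_nil, List.nodup_nil, and_true] at hnd
    apply hnd.1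
    rw [show s((eS.symm i : V), v) = s(v, (eS.symm i : V)) from Sym2.eq_swap]
    exact hceq
  unfold srcl
  exact le_antisymm (Nat.sInf_le hmem) (le_csInf ⟨b, hmem⟩ hlow)
end

section
/- For all positive integers a, b, there exists a connected graph G with src(G) = a and src^ℓ(G) = b if and only if a = b = 1 or 2 ≤ a ≤ b. -/
open SimpleGraph

abbrev GW (n : ℕ) : Type := Fin n ⊕ (Fin n → Fin n)
def gpart (m : ℕ) {n : ℕ} : GW n → ℕ
  | Sum.inl k => min k m
  | Sum.inr _ => m + 1
def gadget (n m : ℕ) : SimpleGraph (Option (GW n)) where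
  Adj x y := x ≠ y ∧ ∀ u v, x = some u → y = some v → gpart m u = gpart m v
  symm := ⟨by
    rintro x y ⟨h1, h2⟩
    exact ⟨h1.symm, fun u v hu hv => (h2 v u hv hu).symm⟩⟩
  loopless := ⟨fun x h => h.1 rfl⟩
lemma gadget_adj_hub {n m : ℕ} (w : GW n) : (gadget n m).Adj none (some w) :=
  ⟨by simp, by simp⟩
lemma gadget_connected (n m : ℕ) : (gadget n m).Connected := by
  rw [connected_iff]
  refine ⟨?_, ⟨none⟩⟩
  intro x y
  have hx : ∀ z : Option (GW n), (gadget n m).Reachable none z := by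
    intro z
    match z with
    | none => exact Reachable.refl _
    | some w => exact (gadget_adj_hub w).reachable
  exact (hx x).symm.trans (hx y)

-- the 2-walk from some u to some v via the hub
def hubWalk {n m : ℕ} (u v : GW n) :
    (gadget n m).Walk (some u) (some v) :=
  Walk.cons ((gadget_adj_hub u).symm) (Walk.cons (gadget_adj_hub v) Walk.nil)

lemma gadget_dist_eq_two {n m : ℕ} {u v : GW n} (h : gpart m u ≠ gpart m v) :
    (gadget n m).dist (some u) (some v) = 2 := by
  have huv : u ≠ v := fun he => h (by rw [he])
  have hle : (gadget n m).dist (some u) (some v) ≤ 2 :=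
    dist_le (hubWalk u v)
  have h0 : (gadget n m).dist (some u) (some v) ≠ 0 := by
    have := (gadget_connected n m).pos_dist_of_ne (u := some u) (v := some v) (by simpa using huv)
    omega
  have h1 : (gadget n m).dist (some u) (some v) ≠ 1 := by
    intro hd
    have hadj := (dist_eq_one_iff_adj).mp hd
    exact h (hadj.2 u v rfl rfl)
  omega

lemma gadget_srcc_iff {n m : ℕ} {β : Type*} (c : Sym2 (Option (GW n)) → β) :
    IsStronglyRainbowConnected (gadget n m) c ↔
      ∀ u v : GW n, gpart m u ≠ gpart m v →
        c s(none, some u) ≠ c s(none, some v) := by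
  constructor
  · intro h u v hne
    obtain ⟨p, hp, hlen, hnd⟩ := h (some u) (some v)
    rw [gadget_dist_eq_two hne] at hlen
    cases p with
    | nil => simp at hlen
    | cons h1 q =>
      cases q with
      | nil => simp at hlen
      | cons h2 q2 =>
        cases q2 with
        | cons h3 q3 => simp at hlen
        | nil =>
          rename_i w
          have hw : w = none := by
            match w with
            | none => rfl
            | some x =>
              exact absurd ((h1.2 u x rfl rfl).trans (h2.2 x v rfl rfl)) hne
          subst hw
          simp only [Walk.edges_cons, Walk.edges_nil, List.map_cons, List.map_nil,
            List.nodup_cons, List.mem_singleton, List.not_mem_nil, not_false_iff,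
            and_true, List.nodup_nil] at hnd
          intro hcc
          apply hnd
          rw [← hcc, Sym2.eq_swap]
  · intro hc u v
    by_cases heq : u = v
    · subst heq
      exact ⟨Walk.nil, by simp, by rw [Walk.length_nil, SimpleGraph.dist_self], by simp⟩
    by_cases hadj : (gadget n m).Adj u v
    · refine ⟨Walk.cons hadj Walk.nil, ?_, ?_, by simp⟩
      · simp [Walk.isPath_def, heq]
      · simp [dist_eq_one_iff_adj.mpr hadj]
    · match u, v with
      | none, some w => exact absurd (gadget_adj_hub w) hadj
      | some w, none => exact absurd (gadget_adj_hub w).symm hadj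
      | none, none => exact absurd rfl heq
      | some x, some y =>
        have hxy : x ≠ y := fun h => heq (by rw [h])
        have hpart : gpart m x ≠ gpart m y := by
          intro h
          exact hadj ⟨heq, fun u v hu hv => by
            cases hu; cases hv; exact h⟩
        refine ⟨hubWalk x y, ?_, ?_, ?_⟩
        · simp [Walk.isPath_def, hubWalk, hxy]
        · simp [hubWalk, gadget_dist_eq_two hpart]
        · have := hc x y hpart
          simp only [hubWalk, Walk.edges_cons, Walk.edges_nil, List.map_cons, List.map_nil,
            List.nodup_cons, List.mem_singleton, List.not_mem_nil, not_false_iff,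
            and_true, List.nodup_nil]
          intro hcc
          apply this
          rw [← hcc, Sym2.eq_swap]

lemma gpart_lt {m n : ℕ} (w : GW n) : gpart m w < m + 2 := by
  cases w with
  | inl k => simp [gpart]
  | inr f => simp [gpart]

/-- The canonical colouring by parts. -/
def gcol (n m : ℕ) : Sym2 (Option (GW n)) → Fin (m + 2) :=
  Sym2.lift ⟨fun x y =>
    match x, y with
    | none, some w => ⟨gpart m w, gpart_lt w⟩
    | some w, none => ⟨gpart m w, gpart_lt w⟩
    | _, _ => ⟨0, by omega⟩,
    by intro x y; cases x <;> cases y <;> rfl⟩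

lemma gcol_star {n m : ℕ} (w : GW n) : gcol n m s(none, some w) = ⟨gpart m w, gpart_lt w⟩ := rfl

/-- representative of part `i` -/
def grep (n m : ℕ) (hmn : m + 1 ≤ n) (i : Fin (m + 2)) : GW n :=
  if h : (i : ℕ) ≤ m then Sum.inl ⟨i, by omega⟩ else Sum.inr (fun x => x)

lemma gpart_grep (n m : ℕ) (hmn : m + 1 ≤ n) (i : Fin (m + 2)) :
    gpart m (grep n m hmn i) = i := by
  unfold grep
  by_cases h : (i : ℕ) ≤ m
  · simp [h, gpart]
  · have : (i : ℕ) = m + 1 := by have := i.isLt; omega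
    simp [h, gpart, this]

lemma src_gadget (n m : ℕ) (hmn : m + 1 ≤ n) : src (gadget n m) = m + 2 := by
  have hmem : (m + 2) ∈ {r : ℕ | ∃ c : Sym2 (Option (GW n)) → Fin r,
      IsStronglyRainbowConnected (gadget n m) c} := by
    refine ⟨gcol n m, (gadget_srcc_iff _).mpr ?_⟩
    intro u v hne
    rw [gcol_star, gcol_star]
    intro hcc
    exact hne (congrArg Fin.val hcc)
  refine le_antisymm (Nat.sInf_le hmem) (le_csInf ⟨_, hmem⟩ ?_)
  rintro r ⟨c, hc⟩
  rw [gadget_srcc_iff] at hc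
  have hinj : Function.Injective (fun i : Fin (m + 2) => c s(none, some (grep n m hmn i))) := by
    intro i j hij
    by_contra hne
    exact hc _ _ (by rw [gpart_grep, gpart_grep]; exact fun h => hne (Fin.ext h)) hij
  simpa using Fintype.card_le_of_injective _ hinj

lemma exists_sdr : ∀ (n : ℕ) (L : Fin n → Finset ℕ), (∀ i, n ≤ (L i).card) →
    ∃ g : Fin n → ℕ, (∀ i, g i ∈ L i) ∧ Function.Injective g := by
  intro n
  induction n with
  | zero => exact fun L _ => ⟨fun i => 0, fun i => i.elim0, fun i => i.elim0⟩
  | succ n ih =>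
    intro L hL
    have hne : (L (Fin.last n)).Nonempty := by
      rw [← Finset.card_pos]
      have := hL (Fin.last n); omega
    obtain ⟨x, hx⟩ := hne
    obtain ⟨g, hg, hinj⟩ := ih (fun i => L i.castSucc \ {x}) (fun i => by
      show n ≤ (L i.castSucc \ {x}).card
      have h1 := hL i.castSucc
      have h2 : (L i.castSucc).card ≤ (L i.castSucc \ {x}).card + ({x} : Finset ℕ).card :=
        Finset.card_le_card_sdiff_add_card
      simp at h2; omega)
    refine ⟨Fin.lastCases x g, ?_, ?_⟩
    · intro i
      induction i using Fin.lastCases with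
      | last => simpa using hx
      | cast i => simpa using (Finset.mem_sdiff.mp (hg i)).1
    · intro i j hij
      induction i using Fin.lastCases with
      | last =>
        induction j using Fin.lastCases with
        | last => rfl
        | cast j =>
          simp only [Fin.lastCases_last, Fin.lastCases_castSucc] at hij
          exact absurd hij.symm (by simpa using (Finset.mem_sdiff.mp (hg j)).2)
      | cast i =>
        induction j using Fin.lastCases with
        | last =>
          simp only [Fin.lastCases_last, Fin.lastCases_castSucc] at hij
          exact absurd hij (by simpa using (Finset.mem_sdiff.mp (hg i)).2)
        | cast j =>
          simp only [Fin.lastCases_castSucc] at hij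
          rw [hinj hij]

noncomputable def pickset (S : Finset ℕ) : ℕ := if h : S.Nonempty then h.choose else 0

lemma pickset_mem {S : Finset ℕ} (h : S.Nonempty) : pickset S ∈ S := by
  rw [pickset, dif_pos h]; exact h.choose_spec

lemma srcl_gadget_mem (n m : ℕ) :
    (n + 1) ∈ {r : ℕ | ∀ L : Sym2 (Option (GW n)) → Finset ℕ,
      (∀ e ∈ (gadget n m).edgeSet, r ≤ (L e).card) →
      ∃ c : Sym2 (Option (GW n)) → ℕ, (∀ e ∈ (gadget n m).edgeSet, c e ∈ L e) ∧
        IsStronglyRainbowConnected (gadget n m) c} := by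
  intro L hL
  obtain ⟨g, hg, hginj⟩ := exists_sdr n (fun k => L s(none, some (Sum.inl k)))
    (fun k => le_trans (by omega) (hL _ ((mem_edgeSet _).mpr (gadget_adj_hub _))))
  have htest : ∀ t : Fin n → Fin n,
      (L s(none, some (Sum.inr t)) \ Finset.image g Finset.univ).Nonempty := by
    intro t
    rw [← Finset.card_pos]
    have h1 := hL s(none, some (Sum.inr t)) ((mem_edgeSet _).mpr (gadget_adj_hub _))
    have h2 : (Finset.image g Finset.univ).card ≤ n :=
      le_trans Finset.card_image_le (by simp)
    have h3 := Finset.card_le_card_sdiff_add_card (s := L s(none, some (Sum.inr t)))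
      (t := Finset.image g Finset.univ)
    omega
  refine ⟨Sym2.lift ⟨fun x y => match x, y with
    | none, some (Sum.inl k) => g k
    | some (Sum.inl k), none => g k
    | none, some (Sum.inr t) => pickset (L s(none, some (Sum.inr t)) \ Finset.image g Finset.univ)
    | some (Sum.inr t), none => pickset (L s(none, some (Sum.inr t)) \ Finset.image g Finset.univ)
    | x, y => pickset (L s(x, y)), ?_⟩, ?_, ?_⟩
  · intro x y
    match x, y with
    | none, none => rfl
    | none, some (Sum.inl k) => rfl
    | none, some (Sum.inr t) => rfl
    | some (Sum.inl k), none => rfl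
    | some (Sum.inr t), none => rfl
    | some (Sum.inl k), some (Sum.inl k') =>
      show pickset (L s(some (Sum.inl k), some (Sum.inl k'))) = pickset (L s(some (Sum.inl k'), some (Sum.inl k)))
      rw [Sym2.eq_swap]
    | some (Sum.inl k), some (Sum.inr t) =>
      show pickset (L s(some (Sum.inl k), some (Sum.inr t))) = pickset (L s(some (Sum.inr t), some (Sum.inl k)))
      rw [Sym2.eq_swap]
    | some (Sum.inr t), some (Sum.inl k) =>
      show pickset (L s(some (Sum.inr t), some (Sum.inl k))) = pickset (L s(some (Sum.inl k), some (Sum.inr t)))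
      rw [Sym2.eq_swap]
    | some (Sum.inr t), some (Sum.inr t') =>
      show pickset (L s(some (Sum.inr t), some (Sum.inr t'))) = pickset (L s(some (Sum.inr t'), some (Sum.inr t)))
      rw [Sym2.eq_swap]
  · intro e he
    induction e using Sym2.ind with
    | _ x y =>
      have hadj : (gadget n m).Adj x y := (mem_edgeSet _).mp he
      match x, y with
      | none, none => exact absurd rfl hadj.1
      | none, some (Sum.inl k) => exact hg k
      | none, some (Sum.inr t) => exact (Finset.mem_sdiff.mp (pickset_mem (htest t))).1
      | some (Sum.inl k), none =>
        show g k ∈ L s(some (Sum.inl k), none)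
        rw [Sym2.eq_swap]; exact hg k
      | some (Sum.inr t), none =>
        show pickset _ ∈ L s(some (Sum.inr t), none)
        rw [Sym2.eq_swap]; exact (Finset.mem_sdiff.mp (pickset_mem (htest t))).1
      | some u, some v =>
        have : (L s(some u, some v)).Nonempty := by
          rw [← Finset.card_pos]
          have := hL _ he; omega
        match u, v with
        | Sum.inl k, Sum.inl k' => exact pickset_mem this
        | Sum.inl k, Sum.inr t => exact pickset_mem this
        | Sum.inr t, Sum.inl k => exact pickset_mem this
        | Sum.inr t, Sum.inr t' => exact pickset_mem this
  · rw [gadget_srcc_iff]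
    intro u v hne
    match u, v with
    | Sum.inl k, Sum.inl k' =>
      have hkk : k ≠ k' := fun h => hne (by rw [h])
      exact fun h => hkk (hginj h)
    | Sum.inl k, Sum.inr t =>
      intro h
      simp only [Sym2.lift_mk] at h
      exact (Finset.mem_sdiff.mp (pickset_mem (htest t))).2
        (Finset.mem_image.mpr ⟨k, Finset.mem_univ k, h⟩)
    | Sum.inr t, Sum.inl k =>
      intro h
      simp only [Sym2.lift_mk] at h
      exact (Finset.mem_sdiff.mp (pickset_mem (htest t))).2
        (Finset.mem_image.mpr ⟨k, Finset.mem_univ k, h.symm⟩)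
    | Sum.inr t, Sum.inr t' => exact absurd rfl hne

lemma srcl_gadget (n m : ℕ) (hmn : m + 1 ≤ n) : srcl (gadget n m) = n + 1 := by
  have hn0 : 0 < n := by omega
  have hmem := srcl_gadget_mem n m
  refine le_antisymm (Nat.sInf_le hmem) (le_csInf ⟨_, hmem⟩ ?_)
  intro r hr
  by_contra hlt
  push_neg at hlt
  have hrn : r ≤ n := by omega
  set A : Fin n → Finset ℕ :=
    fun k => Finset.image (fun i : Fin n => (k : ℕ) * n + i) Finset.univ with hA
  set B : (Fin n → Fin n) → Finset ℕ :=
    fun t => Finset.image (fun k : Fin n => (k : ℕ) * n + t k) Finset.univ with hB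
  have hdecode : ∀ (k i : Fin n), ((k : ℕ) * n + (i : ℕ)) / n = (k : ℕ) := by
    intro k i
    rw [Nat.mul_comm, Nat.mul_add_div hn0]
    simp [Nat.div_eq_of_lt i.isLt]
  have hAcard : ∀ k, (A k).card = n := by
    intro k
    rw [hA, Finset.card_image_of_injective _ (fun i j hij => by
      have : (i : ℕ) = j := by omega
      exact Fin.ext this)]
    simp
  have hBcard : ∀ t, (B t).card = n := by
    intro t
    rw [hB, Finset.card_image_of_injective _ ?_]
    · simp
    · intro i j hij
      have hij' : (i : ℕ) * n + (t i : ℕ) = (j : ℕ) * n + (t j : ℕ) := hij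
      have h1 := hdecode i (t i)
      have h2 := hdecode j (t j)
      rw [hij'] at h1
      exact Fin.ext (h1.symm.trans h2)
  set L : Sym2 (Option (GW n)) → Finset ℕ := Sym2.lift ⟨fun x y => match x, y with
    | none, some (Sum.inl k) => A k
    | some (Sum.inl k), none => A k
    | none, some (Sum.inr t) => B t
    | some (Sum.inr t), none => B t
    | _, _ => Finset.range n, by
      intro x y
      match x, y with
      | none, none => rfl
      | none, some (Sum.inl k) => rfl
      | none, some (Sum.inr t) => rfl
      | some (Sum.inl k), none => rfl
      | some (Sum.inr t), none => rfl
      | some (Sum.inl k), some (Sum.inl k') => rfl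
      | some (Sum.inl k), some (Sum.inr t) => rfl
      | some (Sum.inr t), some (Sum.inl k) => rfl
      | some (Sum.inr t), some (Sum.inr t') => rfl⟩ with hLdef
  have hcards : ∀ e ∈ (gadget n m).edgeSet, r ≤ (L e).card := by
    intro e he
    induction e using Sym2.ind with
    | _ x y =>
      match x, y with
      | none, none => simp [hLdef, Sym2.lift_mk, hrn]
      | none, some (Sum.inl k) => simp [hLdef, Sym2.lift_mk, hAcard, hrn]
      | none, some (Sum.inr t) => simp [hLdef, Sym2.lift_mk, hBcard, hrn]
      | some (Sum.inl k), none => simp [hLdef, Sym2.lift_mk, hAcard, hrn]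
      | some (Sum.inr t), none => simp [hLdef, Sym2.lift_mk, hBcard, hrn]
      | some (Sum.inl k), some (Sum.inl k') => simp [hLdef, Sym2.lift_mk, hrn]
      | some (Sum.inl k), some (Sum.inr t) => simp [hLdef, Sym2.lift_mk, hrn]
      | some (Sum.inr t), some (Sum.inl k) => simp [hLdef, Sym2.lift_mk, hrn]
      | some (Sum.inr t), some (Sum.inr t') => simp [hLdef, Sym2.lift_mk, hrn]
  obtain ⟨c, hcL, hsrc⟩ := hr L hcards
  · rw [gadget_srcc_iff] at hsrc
    have hγ : ∀ k : Fin n, c s(none, some (Sum.inl k)) ∈ A k := by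
      intro k
      have := hcL s(none, some (Sum.inl k)) ((mem_edgeSet _).mpr (gadget_adj_hub _))
      simpa [hLdef, Sym2.lift_mk] using this
    have hex : ∀ k : Fin n, ∃ i : Fin n, (k : ℕ) * n + (i : ℕ) = c s(none, some (Sum.inl k)) := by
      intro k
      obtain ⟨i, _, hi⟩ := Finset.mem_image.mp (hγ k)
      exact ⟨i, hi⟩
    choose σ hσ using hex
    have hτ : c s(none, some (Sum.inr σ)) ∈ B σ := by
      have := hcL s(none, some (Sum.inr σ)) ((mem_edgeSet _).mpr (gadget_adj_hub _))
      simpa [hLdef, Sym2.lift_mk] using this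
    obtain ⟨k₀, _, hk₀⟩ := Finset.mem_image.mp hτ
    have hne : gpart m (Sum.inl k₀ : GW n) ≠ gpart m (Sum.inr σ : GW n) := by
      simp only [gpart]
      omega
    apply hsrc _ _ hne
    rw [← hσ k₀, ← hk₀]

lemma srcc_of_all_adj {V β : Type*} {G : SimpleGraph V} (h : ∀ u v : V, u ≠ v → G.Adj u v)
    (c : Sym2 V → β) : IsStronglyRainbowConnected G c := by
  intro u v
  by_cases he : u = v
  · subst he
    exact ⟨Walk.nil, by simp, by rw [Walk.length_nil, SimpleGraph.dist_self], by simp⟩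
  · refine ⟨Walk.cons (h u v he) Walk.nil, ?_, ?_, by simp⟩
    · simp [Walk.isPath_def, he]
    · simp [dist_eq_one_iff_adj.mpr (h u v he)]

lemma srcl_le_one_of_all_adj {V : Type*} {G : SimpleGraph V}
    (h : ∀ u v : V, u ≠ v → G.Adj u v) : srcl G ≤ 1 := by
  apply Nat.sInf_le
  intro L hL
  refine ⟨fun e => pickset (L e), fun e he => pickset_mem ?_, srcc_of_all_adj h _⟩
  rw [← Finset.card_pos]
  have := hL e he
  omega

lemma top_connected_fin2 : (⊤ : SimpleGraph (Fin 2)).Connected := by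
  rw [connected_iff]
  refine ⟨fun x y => ?_, ⟨0⟩⟩
  by_cases h : x = y
  · subst h; exact Reachable.refl _
  · exact SimpleGraph.Adj.reachable (by simp [h])

lemma src_K2 : src (⊤ : SimpleGraph (Fin 2)) = 1 := by
  have hmem : 1 ∈ {r : ℕ | ∃ c : Sym2 (Fin 2) → Fin r,
      IsStronglyRainbowConnected (⊤ : SimpleGraph (Fin 2)) c} :=
    ⟨fun _ => 0, srcc_of_all_adj (fun u v huv => by simp [huv]) _⟩
  refine le_antisymm (Nat.sInf_le hmem) (le_csInf ⟨_, hmem⟩ ?_)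
  rintro r ⟨c, -⟩
  by_contra hr
  push_neg at hr
  interval_cases r
  exact (c s(0, 0)).elim0

lemma srcl_K2 : srcl (⊤ : SimpleGraph (Fin 2)) = 1 := by
  refine le_antisymm (srcl_le_one_of_all_adj (fun u v huv => by simp [huv])) ?_
  apply le_csInf
  · refine ⟨1, ?_⟩
    intro L hL
    refine ⟨fun e => pickset (L e), fun e he => pickset_mem ?_, srcc_of_all_adj (fun u v huv => by simp [huv]) _⟩
    rw [← Finset.card_pos]
    have := hL e he
    omega
  · rintro r hr
    by_contra hrr
    push_neg at hrr
    interval_cases r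
    obtain ⟨c, hcL, -⟩ := hr (fun _ => ∅) (fun e _ => by simp)
    have hedge : s((0 : Fin 2), (1 : Fin 2)) ∈ (⊤ : SimpleGraph (Fin 2)).edgeSet := by
      simp
    simpa using hcL _ hedge

lemma src_le_srcl_aux {V : Type*} (G : SimpleGraph V) {b : ℕ} (hb : 0 < b)
    (hsrcl : srcl G = b) : src G ≤ b := by
  have hSne : {r : ℕ | ∀ L : Sym2 V → Finset ℕ, (∀ e ∈ G.edgeSet, r ≤ (L e).card) →
      ∃ c : Sym2 V → ℕ, (∀ e ∈ G.edgeSet, c e ∈ L e) ∧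
        IsStronglyRainbowConnected G c}.Nonempty := by
    by_contra h
    rw [Set.not_nonempty_iff_eq_empty] at h
    rw [srcl, h, Nat.sInf_empty] at hsrcl
    omega
  have hbmem : b ∈ {r : ℕ | ∀ L : Sym2 V → Finset ℕ, (∀ e ∈ G.edgeSet, r ≤ (L e).card) →
      ∃ c : Sym2 V → ℕ, (∀ e ∈ G.edgeSet, c e ∈ L e) ∧
        IsStronglyRainbowConnected G c} := by
    rw [← hsrcl]
    exact Nat.sInf_mem hSne
  obtain ⟨c, hcL, hc⟩ := hbmem (fun _ => Finset.range b) (fun e _ => by simp)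
  apply Nat.sInf_le
  refine ⟨fun e => if h : c e < b then ⟨c e, h⟩ else ⟨0, hb⟩, ?_⟩
  intro u v
  obtain ⟨p, hp, hl, hnd⟩ := hc u v
  refine ⟨p, hp, hl, ?_⟩
  apply List.Nodup.of_map Fin.val
  have heq : (p.edges.map (fun e => if h : c e < b then (⟨c e, h⟩ : Fin b) else ⟨0, hb⟩)).map
      Fin.val = p.edges.map c := by
    rw [List.map_map]
    apply List.map_congr_left
    intro e hee
    have hce : c e < b := by
      have := hcL e (Walk.edges_subset_edgeSet p hee)
      simpa using this
    simp [hce]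
  rw [heq]
  exact hnd

lemma all_adj_of_src_eq_one {V : Type*} (G : SimpleGraph V) (hsrc : src G = 1) :
    ∀ u v : V, u ≠ v → G.Adj u v := by
  have hSne : {r : ℕ | ∃ c : Sym2 V → Fin r, IsStronglyRainbowConnected G c}.Nonempty := by
    by_contra h
    rw [Set.not_nonempty_iff_eq_empty] at h
    rw [src, h, Nat.sInf_empty] at hsrc
    omega
  have h1mem : 1 ∈ {r : ℕ | ∃ c : Sym2 V → Fin r, IsStronglyRainbowConnected G c} := by
    rw [← hsrc]
    exact Nat.sInf_mem hSne
  obtain ⟨c, hc⟩ := h1mem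
  intro u v huv
  obtain ⟨p, hp, hl, hnd⟩ := hc u v
  have hlen : p.length ≤ 1 := by
    have h1 : (p.edges.map c).length ≤ 1 := by
      simpa using List.Nodup.length_le_card hnd
    simpa using h1
  cases p with
  | nil => exact absurd rfl huv
  | cons h q =>
    cases q with
    | nil => exact h
    | cons h2 q2 => simp at hlen

/-- Theorem: for positive integers `a, b`, there is a connected graph `G` with
`src(G) = a` and `src^ℓ(G) = b` iff `a = b = 1` or `2 ≤ a ≤ b`. -/
theorem stmt18 (a b : ℕ) (ha : 0 < a) (hb : 0 < b) :
    (∃ (V : Type) (_ : Fintype V) (G : SimpleGraph V),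
      G.Connected ∧ src G = a ∧ srcl G = b) ↔
    (a = 1 ∧ b = 1) ∨ (2 ≤ a ∧ a ≤ b) := by
  constructor
  · rintro ⟨V, _, G, hconn, hsrc, hsrcl⟩
    have hab : a ≤ b := by
      rw [← hsrc]
      exact src_le_srcl_aux G hb hsrcl
    by_cases ha1 : a = 1
    · left
      refine ⟨ha1, ?_⟩
      have hadj := all_adj_of_src_eq_one G (by rw [hsrc, ha1])
      have hle := srcl_le_one_of_all_adj hadj
      rw [hsrcl] at hle
      omega
    · right
      exact ⟨by omega, hab⟩
  · rintro (⟨ha1, hb1⟩ | ⟨ha2, hab⟩)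
    · subst ha1; subst hb1
      exact ⟨Fin 2, inferInstance, ⊤, top_connected_fin2, src_K2, srcl_K2⟩
    · refine ⟨Option (GW (b - 1)), inferInstance, gadget (b - 1) (a - 2),
        gadget_connected _ _, ?_, ?_⟩
      · rw [src_gadget _ _ (by omega)]
        omega
      · rw [srcl_gadget _ _ (by omega)]
        omega
end
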